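/- arXiv:1510.02415 — 6 statements merged into one kernel-verified Lean document; each statement's English description precedes it below -/
import Mathlib

section
/- For all real a < c with -m ≤ a and c ≤ m, letting b_∞ = (c - a)/√(exp(c-a) - 2 + exp(a-c)) and b₁² = 4·(exp((c-a)/2) - 2 + exp((a-c)/2))/(exp(c-a) - 2 + exp(a-c)), one has b₁² ≤ b_∞. -/
open Real

lemma sinh_le_mul_cosh {x : ℝ} (hx : 0 ≤ x) : Real.sinh x ≤ x * Real.cosh x := by
  have h : ∀ y ∈ Set.Ici (0:ℝ), HasDerivAt (fun z => z * Real.cosh z - Real.sinh z)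
      (y * Real.sinh y) y := by
    intro y _
    have h1 : HasDerivAt (fun z : ℝ => z * Real.cosh z) (1 * Real.cosh y + y * Real.sinh y) y :=
      (hasDerivAt_id y).mul (Real.hasDerivAt_cosh y)
    have h2 : HasDerivAt (fun z => z * Real.cosh z - Real.sinh z)
        (1 * Real.cosh y + y * Real.sinh y - Real.cosh y) y := h1.sub (Real.hasDerivAt_sinh y)
    convert h2 using 1; ring
  have hmono : MonotoneOn (fun z => z * Real.cosh z - Real.sinh z) (Set.Ici 0) := by
    apply monotoneOn_of_deriv_nonneg (convex_Ici 0)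
    · exact Continuous.continuousOn (by continuity)
    · intro y hy
      exact (h y (Set.mem_of_mem_of_subset hy interior_subset)).differentiableAt.differentiableWithinAt
    · intro y hy
      rw [interior_Ici] at hy
      rw [(h y (Set.mem_Ici.2 (le_of_lt hy))).deriv]
      exact mul_nonneg hy.le (Real.sinh_nonneg_iff.2 hy.le)
  have := hmono (Set.self_mem_Ici) (Set.mem_Ici.2 hx) hx
  simp only [Real.sinh_zero, Real.cosh_zero, mul_one, zero_mul, sub_zero, zero_sub, neg_nonpos] at this
  linarith [this]

theorem stmt_6 (m a c : ℝ) (hac : a < c) (ha : -m ≤ a) (hc : c ≤ m) :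
    4 * (Real.exp ((c - a) / 2) - 2 + Real.exp ((a - c) / 2)) /
        (Real.exp (c - a) - 2 + Real.exp (a - c)) ≤
      (c - a) / Real.sqrt (Real.exp (c - a) - 2 + Real.exp (a - c)) := by
  set t := c - a with htdef
  have ht : 0 < t := by simp [htdef]; linarith
  have hac' : a - c = -t := by ring
  -- abbreviations
  set s := Real.sinh (t/4) with hs
  set k := Real.cosh (t/4) with hk
  have hs0 : 0 < s := Real.sinh_pos_iff.2 (by linarith)
  have hk0 : 0 < k := Real.cosh_pos _
  have hS : Real.sinh (t/2) = 2 * s * k := by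
    have : t/2 = 2 * (t/4) := by ring
    rw [this, Real.sinh_two_mul]
  have hS0 : 0 < Real.sinh (t/2) := Real.sinh_pos_iff.2 (by linarith)
  -- D = (2 sinh(t/2))^2
  have hD : Real.exp t - 2 + Real.exp (-t) = (2 * Real.sinh (t/2))^2 := by
    rw [Real.sinh_eq]
    have e1 : Real.exp (t/2) * Real.exp (t/2) = Real.exp t := by
      rw [← Real.exp_add]; ring_nf
    have e2 : Real.exp (-(t/2)) * Real.exp (-(t/2)) = Real.exp (-t) := by
      rw [← Real.exp_add]; ring_nf
    have e3 : Real.exp (t/2) * Real.exp (-(t/2)) = 1 := by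
      rw [← Real.exp_add]; simp
    nlinarith [e1, e2, e3]
  have hN : Real.exp (t/2) - 2 + Real.exp (-(t/2)) = (2 * s)^2 := by
    rw [hs, Real.sinh_eq]
    have e1 : Real.exp (t/4) * Real.exp (t/4) = Real.exp (t/2) := by
      rw [← Real.exp_add]; ring_nf
    have e2 : Real.exp (-(t/4)) * Real.exp (-(t/4)) = Real.exp (-(t/2)) := by
      rw [← Real.exp_add]; ring_nf
    have e3 : Real.exp (t/4) * Real.exp (-(t/4)) = 1 := by
      rw [← Real.exp_add]; simp
    nlinarith [e1, e2, e3]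
  have hsqrt : Real.sqrt (Real.exp t - 2 + Real.exp (-t)) = 2 * Real.sinh (t/2) := by
    rw [hD, Real.sqrt_sq (by positivity)]
  have hkey : s ≤ (t/4) * k := sinh_le_mul_cosh (by linarith : (0:ℝ) ≤ t/4)
  rw [hac']
  have h2 : Real.exp (-t/2) = Real.exp (-(t/2)) := by ring_nf
  rw [show -t/2 = -(t/2) by ring]
  rw [hsqrt, hN, hD]
  rw [div_le_div_iff₀ (by positivity) (by positivity)]
  rw [hS]
  nlinarith [mul_le_mul_of_nonneg_right hkey (le_of_lt (mul_pos (mul_pos hs0 hs0) hk0)), hs0, hk0]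
end

section
/- For all real y with 0 ≤ y ≤ 1, (1 - y + √(2 - y))² ≤ (1 - 2·ln(y))·√(2 - y²), where for y = 0 the right-hand side is interpreted as +∞ (i.e., the inequality holds on (0,1]). -/
-- log bound: for 0 < y ≤ 1, log y ≤ 2(y-1)/(y+1)
lemma log_le_aux : ∀ y : ℝ, 0 < y → y ≤ 1 → Real.log y ≤ 2*(y-1)/(y+1) := by
  intro y hy hy1
  set f : ℝ → ℝ := fun x => 2*(x-1)/(x+1) - Real.log x with hf
  have hder : ∀ x ∈ Set.Ioo (0:ℝ) 1,
      HasDerivAt f ((2*1*(x+1) - 2*(x-1)*1)/(x+1)^2 - 1/x) x := by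
    intro x hx
    have hx1' : x + 1 ≠ 0 := by linarith [hx.1]
    have hd1 : HasDerivAt (fun x : ℝ => 2*(x-1)/(x+1))
        ((2*1*(x+1) - 2*(x-1)*1)/(x+1)^2) x := by
      have := (((hasDerivAt_id x).sub_const 1).const_mul 2).div
        ((hasDerivAt_id x).add_const 1) hx1'
      simpa [Pi.div_def] using this
    have hd2 : HasDerivAt Real.log (1/x) x := by
      simpa using Real.hasDerivAt_log (ne_of_gt hx.1)
    exact hd1.sub hd2
  have key : AntitoneOn f (Set.Ioc 0 1) := by
    refine antitoneOn_of_deriv_nonpos (convex_Ioc 0 1) ?_ ?_ ?_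
    · apply ContinuousOn.sub
      · exact (continuousOn_const.mul (continuousOn_id.sub continuousOn_const)).div
          (continuousOn_id.add continuousOn_const) (fun x hx => by
            have := hx.1; intro h; linarith)
      · exact Real.continuousOn_log.mono (fun x hx => by simp; linarith [hx.1])
    · rw [interior_Ioc]
      intro x hx
      exact (hder x hx).differentiableAt.differentiableWithinAt
    · rw [interior_Ioc]
      intro x hx
      rw [(hder x hx).deriv]
      have hx0 := hx.1
      have hx1' : (0:ℝ) < x + 1 := by linarith
      rw [div_sub_div _ _ (by positivity) (ne_of_gt hx0), div_nonpos_iff]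
      right
      constructor
      · nlinarith [sq_nonneg (x-1)]
      · positivity
  have h1 : f 1 ≤ f y := key ⟨hy, hy1⟩ ⟨zero_lt_one, le_refl 1⟩ hy1
  have : f 1 = 0 := by simp [hf]
  rw [this] at h1
  simp only [hf] at h1
  linarith

lemma poly_aux (s y r : ℝ) (h1 : 1 ≤ s) (hs : s^2 = 2 - y) (h2 : s^2 ≤ 2)
    (hr : r^2 = 2 - y^2) (hr0 : 0 ≤ r) :
    ((1-y+s)^2*(1+y))^2 ≤ ((5-3*y)*r)^2 := by
  have hy : y = 2 - s^2 := by linarith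
  subst hy
  have hu : 0 ≤ s - 1 := by linarith
  have hs32 : s ≤ 3/2 := by nlinarith
  have hQ : 0 ≤ 11 - 3*s - 46*s^2 - 22*s^3 + 56*s^4 + 64*s^5 + 10*s^6
      - 14*s^7 - 7*s^8 - s^9 := by
    nlinarith [sq_nonneg (s-1), mul_nonneg hu hu, mul_nonneg (mul_nonneg hu hu) hu,
      mul_nonneg (mul_nonneg (mul_nonneg hu hu) hu) hu, h2, hs32,
      mul_nonneg (mul_nonneg (mul_nonneg (mul_nonneg hu hu) hu) hu) hu]
  have hfac : 0 ≤ (s-1)^3 * (11 - 3*s - 46*s^2 - 22*s^3 + 56*s^4 + 64*s^5 + 10*s^6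
      - 14*s^7 - 7*s^8 - s^9) :=
    mul_nonneg (by positivity) hQ
  have hr2 : r^2 = 2 - (2 - s^2)^2 := by rw [hr]
  nlinarith [hfac, hr2]

theorem stmt_9 : ∀ y : ℝ, 0 < y → y ≤ 1 →
    (1 - y + Real.sqrt (2 - y)) ^ 2 ≤
      (1 - 2 * Real.log y) * Real.sqrt (2 - y ^ 2) := by
  intro y hy hy1
  set s := Real.sqrt (2 - y) with hsdef
  set r := Real.sqrt (2 - y^2) with hrdef
  have hs : s^2 = 2 - y := Real.sq_sqrt (by linarith)
  have hr : r^2 = 2 - y^2 := Real.sq_sqrt (by nlinarith)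
  have hr0 : 0 ≤ r := Real.sqrt_nonneg _
  have h1s : 1 ≤ s := by
    have h := Real.sqrt_le_sqrt (show (1:ℝ) ≤ 2 - y by linarith)
    rwa [Real.sqrt_one] at h
  have h2s : s^2 ≤ 2 := by linarith
  have hpoly := poly_aux s y r h1s hs h2s hr hr0
  have hA : 0 ≤ (1-y+s)^2*(1+y) := by positivity
  have hB : 0 ≤ (5-3*y)*r := mul_nonneg (by linarith) hr0
  have hle : (1-y+s)^2*(1+y) ≤ (5-3*y)*r := by
    nlinarith [hpoly, hA, hB]
  have hlog := log_le_aux y hy hy1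
  have h1y : (0:ℝ) < 1 + y := by linarith
  have hdiv : (5-3*y)/(1+y) ≤ 1 - 2*Real.log y := by
    rw [div_le_iff₀ h1y]
    rw [le_div_iff₀ (by linarith : (0:ℝ) < y+1)] at hlog
    nlinarith [hlog]
  have hkey : (1-y+s)^2 ≤ (5-3*y)/(1+y) * r := by
    rw [div_mul_eq_mul_div, le_div_iff₀ h1y]
    linarith [hle]
  calc (1-y+s)^2 ≤ (5-3*y)/(1+y) * r := hkey
    _ ≤ (1 - 2*Real.log y) * r := mul_le_mul_of_nonneg_right hdiv hr0
end

section
/- For all real y with 0 ≤ y ≤ 1, (1 - y + √(2 - y))² ≤ 6 - 7·y + 2·y². -/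
theorem stmt_10 : ∀ y : ℝ, 0 ≤ y → y ≤ 1 →
    (1 - y + Real.sqrt (2 - y)) ^ 2 ≤ 6 - 7 * y + 2 * y ^ 2 := by
  intro y hy hy1
  have h2 : (0:ℝ) ≤ 2 - y := by linarith
  have hs := Real.sq_sqrt h2
  have hsnn := Real.sqrt_nonneg (2 - y)
  set s := Real.sqrt (2 - y)
  have h2s : 2 * s ≤ 3 - y := by
    nlinarith [sq_nonneg (1 - y), sq_nonneg (2 * s - (3 - y))]
  nlinarith [mul_le_mul_of_nonneg_left h2s (by linarith : (0:ℝ) ≤ 1 - y)]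
end

section
/- For all real y with 0 < y ≤ 1, 6 - 7·y + 2·y² ≤ (1 - 2·ln(y))·√(2 - y²). -/
open Real Set

lemma log_le_poly4 (y : ℝ) (hy : 0 < y) (hy1 : y ≤ 1) :
    Real.log y ≤ -((1-y) + (1-y)^2/2 + (1-y)^3/3 + (1-y)^4/4) := by
  set f : ℝ → ℝ := fun x => Real.log x + ((1-x) + (1-x)^2/2 + (1-x)^3/3 + (1-x)^4/4) with hf
  have key : ∀ x ∈ Set.Icc y 1, HasDerivAt f ((1-x)^4 / x) x := by
    intro x hx
    have hx0 : 0 < x := lt_of_lt_of_le hy hx.1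
    have h1 : HasDerivAt Real.log (1/x) x := by
      simpa using Real.hasDerivAt_log (ne_of_gt hx0)
    have hb : HasDerivAt (fun x : ℝ => 1 - x) (-1) x := by
      simpa using (hasDerivAt_id x).const_sub (1:ℝ)
    have h2 := ((hb.add ((hb.pow 2).div_const 2)).add ((hb.pow 3).div_const 3)).add
      ((hb.pow 4).div_const 4)
    have h3 := h1.add h2
    convert h3 using 1
    case e'_4 => rfl
    case e'_5 => rfl
    case e'_8 => rfl
    push_cast
    field_simp [hx0.ne']
    ring
  have hmono : MonotoneOn f (Set.Icc y 1) := by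
    apply monotoneOn_of_deriv_nonneg (convex_Icc y 1)
    · exact fun x hx => (key x hx).continuousAt.continuousWithinAt
    · intro x hx
      rw [interior_Icc] at hx
      exact ((key x (Set.mem_Icc_of_Ioo hx)).differentiableAt).differentiableWithinAt
    · intro x hx
      rw [interior_Icc] at hx
      rw [(key x (Set.mem_Icc_of_Ioo hx)).deriv]
      have hx0 : 0 < x := lt_trans hy hx.1
      positivity
  have h := hmono (Set.left_mem_Icc.mpr hy1) (Set.right_mem_Icc.mpr hy1) hy1
  simp only [hf, Real.log_one] at h
  norm_num at h
  linarith

lemma sqrt_ge_poly (y : ℝ) (hy : 0 < y) (hy1 : y ≤ 1) :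
    1 + (1-y) - (1-y)^2 + (1-y)^3/2 - (1-y)^4/8 ≤ Real.sqrt (2 - y^2) := by
  have hg : (0:ℝ) ≤ 1 + (1-y) - (1-y)^2 + (1-y)^3/2 - (1-y)^4/8 := by
    nlinarith [sq_nonneg (1-y), sq_nonneg ((1-y)^2), mul_nonneg (sub_nonneg.mpr hy1) hy.le]
  rw [show (1:ℝ) + (1-y) - (1-y)^2 + (1-y)^3/2 - (1-y)^4/8 =
      Real.sqrt ((1 + (1-y) - (1-y)^2 + (1-y)^3/2 - (1-y)^4/8)^2) from
    (Real.sqrt_sq hg).symm]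
  apply Real.sqrt_le_sqrt
  nlinarith [sq_nonneg (1-y), sq_nonneg ((1-y)^2), sq_nonneg ((1-y)^3), pow_nonneg (sub_nonneg.mpr hy1) 5,
    pow_nonneg (sub_nonneg.mpr hy1) 6, pow_nonneg (sub_nonneg.mpr hy1) 7, pow_nonneg (sub_nonneg.mpr hy1) 8,
    mul_nonneg (pow_nonneg (sub_nonneg.mpr hy1) 6) hy.le,
    mul_nonneg (pow_nonneg (sub_nonneg.mpr hy1) 7) hy.le]

theorem stmt_11 : ∀ y : ℝ, 0 < y → y ≤ 1 →
    6 - 7 * y + 2 * y ^ 2 ≤ (1 - 2 * Real.log y) * Real.sqrt (2 - y ^ 2) := by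
  intro y hy hy1
  have h1 := log_le_poly4 y hy hy1
  have h2 := sqrt_ge_poly y hy hy1
  have ht0 : (0:ℝ) ≤ 1 - y := by linarith
  have ht1 : 1 - y ≤ 1 := by linarith
  have hPle : 1 + 2*(1-y) + (1-y)^2 + (2/3)*(1-y)^3 + (1/2)*(1-y)^4 ≤ 1 - 2 * Real.log y := by
    linarith
  have hgpos : (0:ℝ) ≤ 1 + (1-y) - (1-y)^2 + (1-y)^3/2 - (1-y)^4/8 := by
    nlinarith [sq_nonneg (1-y), sq_nonneg ((1-y)^2), mul_nonneg ht0 hy.le]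
  have hPpos : (0:ℝ) ≤ 1 + 2*(1-y) + (1-y)^2 + (2/3)*(1-y)^3 + (1/2)*(1-y)^4 := by positivity
  have hmul := mul_le_mul hPle h2 hgpos (le_trans hPpos hPle)
  have hfin : 6 - 7 * y + 2 * y^2 ≤
      (1 + 2*(1-y) + (1-y)^2 + (2/3)*(1-y)^3 + (1/2)*(1-y)^4) *
      (1 + (1-y) - (1-y)^2 + (1-y)^3/2 - (1-y)^4/8) := by
    nlinarith [pow_nonneg ht0 3, pow_nonneg ht0 4, pow_nonneg ht0 5, pow_nonneg ht0 6,
      pow_nonneg ht0 7, pow_nonneg ht0 8,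
      mul_nonneg (pow_nonneg ht0 3) hy.le,
      mul_nonneg (pow_nonneg ht0 5) hy.le,
      mul_nonneg (mul_nonneg (pow_nonneg ht0 5) hy.le) hy.le,
      mul_nonneg (pow_nonneg ht0 7) hy.le]
  linarith
end

section
/- For the Laplacian model with unit scale and means ±m, m > 0, and the one-bit quantizer with threshold 0, the Bhattacharyya coefficient ∑_{u∈{1,2}} √(P(u|0)·P(u|1)) equals exp(-m)·√(2·exp(m) - 1), i.e., its square is exp(-m)·(2 - exp(-m)). -/
open MeasureTheory

open Set Real in
lemma aux_far (c : ℝ) (hc : 0 < c) :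
    ∫ x in Iic (0 : ℝ), Real.exp (-|x - c|) = Real.exp (-c) := by
  rw [setIntegral_congr_fun measurableSet_Iic
      (g := fun x => Real.exp (-c) * Real.exp x) (fun x hx => by
        simp only [Set.mem_Iic] at hx
        show Real.exp (-|x - c|) = Real.exp (-c) * Real.exp x
        rw [abs_of_nonpos (by linarith), neg_neg, show x - c = -c + x by ring,
          Real.exp_add])]
  rw [integral_const_mul, integral_exp_Iic_zero, mul_one]

open Set Real in
lemma aux_near (c : ℝ) (hc : 0 < c) :
    ∫ x in Iic (0 : ℝ), Real.exp (-|x + c|) = 2 - Real.exp (-c) := by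
  have hsplit : Iic (0 : ℝ) = Iic (-c) ∪ Ioc (-c) 0 :=
    (Iic_union_Ioc_eq_Iic (by linarith)).symm
  have h1 : EqOn (fun x => Real.exp (-|x + c|))
      (fun x => Real.exp c * Real.exp x) (Iic (-c)) := fun x hx => by
    simp only [Set.mem_Iic] at hx
    show Real.exp (-|x + c|) = Real.exp c * Real.exp x
    rw [abs_of_nonpos (by linarith), neg_neg, show x + c = c + x by ring,
      Real.exp_add]
  have hi1 : IntegrableOn (fun x => Real.exp (-|x + c|)) (Iic (-c)) :=
    MeasureTheory.IntegrableOn.congr_fun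
      ((integrableOn_exp_Iic (-c)).const_mul (Real.exp c))
      (fun x hx => (h1 hx).symm) measurableSet_Iic
  have hi2 : IntegrableOn (fun x => Real.exp (-|x + c|)) (Ioc (-c) 0) :=
    (Continuous.integrableOn_Ioc (by fun_prop))
  rw [hsplit, setIntegral_union (Iic_disjoint_Ioc le_rfl) measurableSet_Ioc hi1 hi2]
  have v1 : ∫ x in Iic (-c), Real.exp (-|x + c|) = 1 := by
    rw [setIntegral_congr_fun measurableSet_Iic h1, integral_const_mul,
      integral_exp_Iic, ← Real.exp_add]
    simp
  have v2 : ∫ x in Ioc (-c) 0, Real.exp (-|x + c|) = 1 - Real.exp (-c) := by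
    rw [setIntegral_congr_fun measurableSet_Ioc
      (g := fun x => Real.exp (-(x + c))) (fun x hx => by
        rw [abs_of_nonneg (by linarith [hx.1] : (0:ℝ) ≤ x + c)])]
    rw [← intervalIntegral.integral_of_le (by linarith : -c ≤ (0:ℝ))]
    have := intervalIntegral.integral_comp_add_right (a := -c) (b := 0)
      (fun y => Real.exp (-y)) c
    simp only [neg_add_cancel, zero_add] at this
    rw [this, intervalIntegral.integral_comp_neg (fun y => Real.exp y)]
    simp [integral_exp]
  rw [v1, v2]; ring

theorem stmt_15 (m : ℝ) (hm : 0 < m)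
    (b : ℝ)
    (hb : b =
      Real.sqrt ((∫ x in Set.Iio (0 : ℝ), 1 / 2 * Real.exp (-|x + m|)) *
          (∫ x in Set.Iio (0 : ℝ), 1 / 2 * Real.exp (-|x - m|))) +
      Real.sqrt ((∫ x in Set.Ioi (0 : ℝ), 1 / 2 * Real.exp (-|x + m|)) *
          (∫ x in Set.Ioi (0 : ℝ), 1 / 2 * Real.exp (-|x - m|)))) :
    b = Real.exp (-m) * Real.sqrt (2 * Real.exp m - 1) ∧
    b ^ 2 = Real.exp (-m) * (2 - Real.exp (-m)) := by
  set e := Real.exp (-m) with he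
  have hepos : 0 < e := Real.exp_pos _
  have hele : e < 1 := by
    rw [he]; exact Real.exp_lt_one_iff.mpr (by linarith)
  -- the four integrals
  have I1 : (∫ x in Set.Iio (0 : ℝ), 1 / 2 * Real.exp (-|x + m|)) = 1 - e / 2 := by
    rw [setIntegral_congr_set Iio_ae_eq_Iic, integral_const_mul, aux_near m hm]
    ring
  have I2 : (∫ x in Set.Iio (0 : ℝ), 1 / 2 * Real.exp (-|x - m|)) = e / 2 := by
    rw [setIntegral_congr_set Iio_ae_eq_Iic, integral_const_mul, aux_far m hm]
    ring
  have I3 : (∫ x in Set.Ioi (0 : ℝ), 1 / 2 * Real.exp (-|x + m|)) = e / 2 := by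
    have := integral_comp_neg_Ioi (0 : ℝ) (fun x => 1 / 2 * Real.exp (-|x - m|))
    simp only [neg_zero] at this
    rw [show (fun x => 1 / 2 * Real.exp (-|x + m|)) =
        (fun x => 1 / 2 * Real.exp (-|(-x) - m|)) from funext fun x => by
          rw [show |(-x) - m| = |x + m| by rw [abs_sub_comm]; ring_nf]]
    rw [this, integral_const_mul, aux_far m hm]; ring
  have I4 : (∫ x in Set.Ioi (0 : ℝ), 1 / 2 * Real.exp (-|x - m|)) = 1 - e / 2 := by
    have := integral_comp_neg_Ioi (0 : ℝ) (fun x => 1 / 2 * Real.exp (-|x + m|))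
    simp only [neg_zero] at this
    rw [show (fun x => 1 / 2 * Real.exp (-|x - m|)) =
        (fun x => 1 / 2 * Real.exp (-|(-x) + m|)) from funext fun x => by
          rw [show |(-x) + m| = |x - m| by rw [← abs_neg]; ring_nf]]
    rw [this, integral_const_mul, aux_near m hm]; ring
  rw [I1, I2, I3, I4] at hb
  have hval : (1 - e / 2) * (e / 2) = (2 * e - e ^ 2) / 4 := by ring
  have hnn : 0 ≤ 2 * e - e ^ 2 := by nlinarith
  have hbval : b = Real.sqrt (2 * e - e ^ 2) := by
    rw [hb, hval, show (e/2) * (1 - e/2) = (2 * e - e ^ 2) / 4 by ring,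
      show (2 * e - e ^ 2) / 4 = (2 * e - e ^ 2) * (1/2)^2 by ring,
      Real.sqrt_mul hnn, Real.sqrt_sq (by norm_num : (0:ℝ) ≤ 1/2)]
    ring
  have hem : e * Real.exp m = 1 := by rw [he, ← Real.exp_add]; simp
  constructor
  · rw [hbval, show (2 * e - e ^ 2) = e ^ 2 * (2 * Real.exp m - 1) by
      linear_combination (-2 * e) * hem]
    rw [Real.sqrt_mul (by positivity), Real.sqrt_sq hepos.le]
  · rw [hbval, Real.sq_sqrt hnn]; ring
end

section
/- For β_r = m - log(1 + m + (m³/6)·2^{-2r}) with m > 0, one has β_{r-1} + β_{r+1} ≤ 2·β_r for all integers r ≥ 1. -/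
theorem stmt_17 (m : ℝ) (hm : 0 < m) (β : ℕ → ℝ)
    (hβ : ∀ r : ℕ, β r = m - Real.log (1 + m + m ^ 3 / 6 * (2 : ℝ) ^ (-(2 * (r : ℤ))))) :
    ∀ r : ℕ, 1 ≤ r → β (r - 1) + β (r + 1) ≤ 2 * β r := by
  intro r hr
  obtain ⟨k, rfl⟩ := Nat.exists_eq_add_of_le hr
  simp only [hβ]
  have hk1 : (1 + k - 1 : ℕ) = k := by omega
  have hk2 : (1 + k + 1 : ℕ) = k + 2 := by omega
  rw [hk1, hk2]
  set t : ℝ := (2 : ℝ) ^ (-(2 * ((1 + k : ℕ) : ℤ))) with ht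
  have htpos : 0 < t := by positivity
  have e1 : (2 : ℝ) ^ (-(2 * ((k : ℕ) : ℤ))) = 4 * t := by
    rw [ht, show (4:ℝ) = (2:ℝ)^(2:ℤ) from by norm_num,
      ← zpow_add₀ (by norm_num : (2:ℝ) ≠ 0)]
    congr 1
    push_cast
    ring
  have e2 : (2 : ℝ) ^ (-(2 * ((k + 2 : ℕ) : ℤ))) = t / 4 := by
    rw [ht, div_eq_mul_inv, ← zpow_neg_one (4:ℝ),
      show ((4:ℝ)) = (2:ℝ)^(2:ℤ) by norm_num,
      ← zpow_mul, ← zpow_add₀ (by norm_num : (2:ℝ) ≠ 0)]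
    congr 1
    push_cast
    ring
  rw [e1, e2]
  set c : ℝ := m ^ 3 / 6 with hc
  have hcpos : 0 < c := by positivity
  set a : ℝ := 1 + m with ha
  have hapos : 0 < a := by positivity
  have h1 : 0 < a + c * (4 * t) := by positivity
  have h2 : 0 < a + c * (t / 4) := by positivity
  have h3 : 0 < a + c * t := by positivity
  have key : (a + c * t) ^ 2 ≤ (a + c * (4 * t)) * (a + c * (t / 4)) := by
    nlinarith [mul_pos hapos (mul_pos hcpos htpos)]
  have hlog : 2 * Real.log (a + c * t) ≤
      Real.log (a + c * (4 * t)) + Real.log (a + c * (t / 4)) := by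
    rw [← Real.log_mul (ne_of_gt h1) (ne_of_gt h2),
      show (2 : ℝ) * Real.log (a + c * t) = Real.log ((a + c * t) ^ 2) by
        rw [Real.log_pow]; push_cast; ring]
    exact Real.log_le_log (by positivity) key
  linarith
end
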